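/- Assume setting (C1). For each n ≥ 1 let R_n be a resistance metric on A_n, and suppose there are continuous functions ψ_1, ψ_2 : [0,∞) → [0,∞) with ψ_1(0) = ψ_2(0) = 0 and ψ_2(t) ≥ ψ_1(t) > 0 for all t > 0, such that ψ_1(d(x,y)) ≤ R_n(x,y) ≤ ψ_2(d(x,y)) for all n ≥ 1 and all x,y ∈ A_n. Then there exist a resistance metric R on A and a strictly increasing sequence of indices n_1 < n_2 < ⋯ such that R_{n_k}(x_k,y_k) → R(x,y) whenever x_k, y_k ∈ A_{n_k} with x_k → x ∈ A and y_k → y ∈ A; moreover ψ_1(d(x,y)) ≤ R(x,y) ≤ ψ_2(d(x,y)) for all x,y ∈ A. -/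

import Mathlib

open Filter Topology

/-- Energy of a conductance matrix `c` over a finite subset `V` of `X`:
`E(f) = (1/2) ∑_{x,y ∈ V} c x y (f x − f y)²` (diagonal terms vanish). -/
noncomputable def finsetEnergy {X : Type*} (V : Finset X) (c : X → X → ℝ)
    (f : X → ℝ) : ℝ :=
  (1 / 2) * ∑ x ∈ V, ∑ y ∈ V, c x y * (f x - f y) ^ 2

/-- `R` is a resistance metric on the set `S ⊆ X`: for every finite `V ⊆ S`
there is a resistance form on `V` (symmetric nonnegative conductances, energy
vanishing exactly on functions constant on `V`) whose effective resistance
agrees with `R` on `V × V`. -/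
def IsResistanceMetricOn {X : Type*} (S : Set X) (R : X → X → ℝ) : Prop :=
  ∀ V : Finset X, ↑V ⊆ S → ∃ c : X → X → ℝ,
    (∀ x y, c x y = c y x) ∧ (∀ x y, 0 ≤ c x y) ∧
    (∀ f : X → ℝ, finsetEnergy V c f = 0 ↔ ∀ x ∈ V, ∀ y ∈ V, f x = f y) ∧
    ∀ x ∈ V, ∀ y ∈ V, x ≠ y →
      IsLUB {t : ℝ | ∃ f : X → ℝ, (¬∀ x' ∈ V, ∀ y' ∈ V, f x' = f y') ∧
        t = (f x - f y) ^ 2 / finsetEnergy V c f} (R x y)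


section Aux
variable {X : Type*}

/-- The set of energy ratios. -/
def ratioSet (V : Finset X) (c : X → X → ℝ) (x y : X) : Set ℝ :=
  {t : ℝ | ∃ f : X → ℝ, (¬∀ x' ∈ V, ∀ y' ∈ V, f x' = f y') ∧
    t = (f x - f y) ^ 2 / finsetEnergy V c f}

lemma energy_nonneg (V : Finset X) (c : X → X → ℝ) (hc : ∀ x y, 0 ≤ c x y)
    (f : X → ℝ) : 0 ≤ finsetEnergy V c f := by
  have h : (0:ℝ) ≤ ∑ x ∈ V, ∑ y ∈ V, c x y * (f x - f y) ^ 2 :=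
    Finset.sum_nonneg fun x _ => Finset.sum_nonneg fun y _ =>
      mul_nonneg (hc x y) (sq_nonneg _)
  unfold finsetEnergy; linarith

lemma energy_congr {V : Finset X} {c : X → X → ℝ} {f g : X → ℝ}
    (h : ∀ x ∈ V, f x = g x) : finsetEnergy V c f = finsetEnergy V c g := by
  unfold finsetEnergy
  congr 1
  refine Finset.sum_congr rfl fun x hx => Finset.sum_congr rfl fun y hy => ?_
  rw [h x hx, h y hy]

lemma energy_offdiag_congr {V : Finset X} {c c' : X → X → ℝ}
    (h : ∀ x y, x ≠ y → c x y = c' x y) (f : X → ℝ) :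
    finsetEnergy V c f = finsetEnergy V c' f := by
  unfold finsetEnergy
  congr 1
  refine Finset.sum_congr rfl fun x hx => Finset.sum_congr rfl fun y hy => ?_
  by_cases hxy : x = y
  · subst hxy; simp
  · rw [h x y hxy]

lemma energy_image {V : Finset X} [DecidableEq X] {e : X → X}
    (he : ∀ x ∈ V, ∀ y ∈ V, e x = e y → x = y) (c : X → X → ℝ) (g : X → ℝ) :
    finsetEnergy (V.image e) c g
      = finsetEnergy V (fun x y => c (e x) (e y)) (fun x => g (e x)) := by
  unfold finsetEnergy
  rw [Finset.sum_image he]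
  congr 1
  refine Finset.sum_congr rfl fun x hx => ?_
  rw [Finset.sum_image he]

lemma energy_affine (V : Finset X) (c : X → X → ℝ) (f : X → ℝ) (a b : ℝ) :
    finsetEnergy V c (fun x => a * f x + b) = a ^ 2 * finsetEnergy V c f := by
  have h : ∀ x y : X, c x y * ((a * f x + b) - (a * f y + b)) ^ 2
      = a ^ 2 * (c x y * (f x - f y) ^ 2) := by intros; ring
  simp only [finsetEnergy, h, ← Finset.mul_sum]
  ring

lemma energy_pos {V : Finset X} {c : X → X → ℝ} (hnn : ∀ x y, 0 ≤ c x y)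
    (hiff : ∀ f : X → ℝ, finsetEnergy V c f = 0 ↔ ∀ x ∈ V, ∀ y ∈ V, f x = f y)
    {f : X → ℝ} (hnc : ¬∀ x ∈ V, ∀ y ∈ V, f x = f y) :
    0 < finsetEnergy V c f :=
  (energy_nonneg V c hnn f).lt_of_ne fun h => hnc ((hiff f).mp h.symm)

lemma pair_le_energy {V : Finset X} {c : X → X → ℝ}
    (hsym : ∀ x y, c x y = c y x) (hnn : ∀ x y, 0 ≤ c x y)
    {x y : X} (hx : x ∈ V) (hy : y ∈ V) (hxy : x ≠ y) (f : X → ℝ) :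
    c x y * (f x - f y) ^ 2 ≤ finsetEnergy V c f := by
  classical
  have hrw : finsetEnergy V c f
      = (1/2) * ∑ p ∈ V ×ˢ V, c p.1 p.2 * (f p.1 - f p.2) ^ 2 := by
    rw [finsetEnergy, Finset.sum_product]
  have hsub : ({(x,y),(y,x)} : Finset (X × X)) ⊆ V ×ˢ V := by
    intro p hp
    simp only [Finset.mem_insert, Finset.mem_singleton] at hp
    rcases hp with rfl | rfl <;> simp [Finset.mem_product, hx, hy]
  have hle : ∑ p ∈ ({(x,y),(y,x)} : Finset (X × X)), c p.1 p.2 * (f p.1 - f p.2) ^ 2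
      ≤ ∑ p ∈ V ×ˢ V, c p.1 p.2 * (f p.1 - f p.2) ^ 2 :=
    Finset.sum_le_sum_of_subset_of_nonneg hsub
      (fun p _ _ => mul_nonneg (hnn _ _) (sq_nonneg _))
  have hpairne : ((x,y) : X × X) ≠ (y,x) := fun h => hxy (congrArg Prod.fst h)
  have hpair : ∑ p ∈ ({(x,y),(y,x)} : Finset (X × X)), c p.1 p.2 * (f p.1 - f p.2) ^ 2
      = 2 * (c x y * (f x - f y) ^ 2) := by
    rw [Finset.sum_pair hpairne]
    have h1 := hsym y x
    ring_nf
    rw [h1]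
    ring
  rw [hrw]
  linarith

lemma lub_nonneg {V : Finset X} {c : X → X → ℝ}
    (hnn : ∀ x y, 0 ≤ c x y)
    (hiff : ∀ f : X → ℝ, finsetEnergy V c f = 0 ↔ ∀ x ∈ V, ∀ y ∈ V, f x = f y)
    {x y : X} (hx : x ∈ V) (hy : y ∈ V) (hxy : x ≠ y) {r : ℝ}
    (hl : IsLUB (ratioSet V c x y) r) : 0 ≤ r := by
  classical
  set f₀ : X → ℝ := fun z => if z = x then 1 else 0 with hf₀
  have hnc : ¬∀ x' ∈ V, ∀ y' ∈ V, f₀ x' = f₀ y' := by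
    intro h
    have := h x hx y hy
    simp [f₀, hxy, Ne.symm hxy] at this
  have hE : 0 < finsetEnergy V c f₀ := energy_pos hnn hiff hnc
  have hmem : (f₀ x - f₀ y) ^ 2 / finsetEnergy V c f₀ ∈ ratioSet V c x y := ⟨f₀, hnc, rfl⟩
  have h1 := hl.1 hmem
  have h2 : 0 ≤ (f₀ x - f₀ y) ^ 2 / finsetEnergy V c f₀ := div_nonneg (sq_nonneg _) hE.le
  linarith

lemma sq_le_of_isLUB {V : Finset X} {c : X → X → ℝ}
    (hnn : ∀ x y, 0 ≤ c x y)
    (hiff : ∀ f : X → ℝ, finsetEnergy V c f = 0 ↔ ∀ x ∈ V, ∀ y ∈ V, f x = f y)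
    {x y : X} (hx : x ∈ V) (hy : y ∈ V) (hxy : x ≠ y) {r : ℝ}
    (hl : IsLUB (ratioSet V c x y) r) (f : X → ℝ) :
    (f x - f y) ^ 2 ≤ r * finsetEnergy V c f := by
  have hr0 : 0 ≤ r := lub_nonneg hnn hiff hx hy hxy hl
  by_cases hconst : ∀ x' ∈ V, ∀ y' ∈ V, f x' = f y'
  · have h : f x = f y := hconst x hx y hy
    rw [h]
    simpa using mul_nonneg hr0 (energy_nonneg V c hnn f)
  · have hE : 0 < finsetEnergy V c f := energy_pos hnn hiff hconst
    have hmem : (f x - f y) ^ 2 / finsetEnergy V c f ∈ ratioSet V c x y := ⟨f, hconst, rfl⟩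
    have h1 := hl.1 hmem
    calc (f x - f y) ^ 2 = ((f x - f y) ^ 2 / finsetEnergy V c f) * finsetEnergy V c f := by
          field_simp
      _ ≤ r * finsetEnergy V c f := mul_le_mul_of_nonneg_right h1 hE.le

lemma conductance_le {V : Finset X} {c : X → X → ℝ}
    (hsym : ∀ x y, c x y = c y x) (hnn : ∀ x y, 0 ≤ c x y)
    (hiff : ∀ f : X → ℝ, finsetEnergy V c f = 0 ↔ ∀ x ∈ V, ∀ y ∈ V, f x = f y)
    {x y : X} (hx : x ∈ V) (hy : y ∈ V) (hxy : x ≠ y) {r : ℝ}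
    (hl : IsLUB (ratioSet V c x y) r) {ρ : ℝ} (hρ : 0 < ρ) (hρr : ρ ≤ r) :
    c x y ≤ ρ⁻¹ := by
  rcases eq_or_lt_of_le (hnn x y) with hc0 | hcpos
  · rw [← hc0]; positivity
  have hub : (c x y)⁻¹ ∈ upperBounds (ratioSet V c x y) := by
    rintro t ⟨f, hnc, rfl⟩
    have hE : 0 < finsetEnergy V c f := energy_pos hnn hiff hnc
    have hkey : c x y * (f x - f y) ^ 2 ≤ finsetEnergy V c f :=
      pair_le_energy hsym hnn hx hy hxy f
    rw [div_le_iff₀ hE, inv_mul_eq_div, le_div_iff₀ hcpos]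
    linarith
  have h2 : r ≤ (c x y)⁻¹ := hl.2 hub
  have h3 : ρ ≤ (c x y)⁻¹ := le_trans hρr h2
  have h4 : ρ * c x y ≤ 1 := by
    calc ρ * c x y ≤ (c x y)⁻¹ * c x y := mul_le_mul_of_nonneg_right h3 hcpos.le
      _ = 1 := inv_mul_cancel₀ hcpos.ne'
  rw [← mul_le_mul_iff_right₀ hρ, mul_inv_cancel₀ hρ.ne']
  exact h4

lemma abs_sub_le_sqrt {V : Finset X} {c : X → X → ℝ}
    (hnn : ∀ x y, 0 ≤ c x y)
    (hiff : ∀ f : X → ℝ, finsetEnergy V c f = 0 ↔ ∀ x ∈ V, ∀ y ∈ V, f x = f y)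
    {u w : X} (hu : u ∈ V) (hw : w ∈ V) (huw : u ≠ w) {r : ℝ}
    (hl : IsLUB (ratioSet V c u w) r) (f : X → ℝ) :
    |f u - f w| ≤ Real.sqrt r * Real.sqrt (finsetEnergy V c f) := by
  have hr0 : 0 ≤ r := lub_nonneg hnn hiff hu hw huw hl
  have h1 := sq_le_of_isLUB hnn hiff hu hw huw hl f
  calc |f u - f w| = Real.sqrt ((f u - f w) ^ 2) := (Real.sqrt_sq_eq_abs _).symm
    _ ≤ Real.sqrt (r * finsetEnergy V c f) := Real.sqrt_le_sqrt h1
    _ = Real.sqrt r * Real.sqrt (finsetEnergy V c f) := Real.sqrt_mul hr0 _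

lemma sqrt_quad {V : Finset X} {c : X → X → ℝ}
    (hnn : ∀ x y, 0 ≤ c x y)
    (hiff : ∀ f : X → ℝ, finsetEnergy V c f = 0 ↔ ∀ x ∈ V, ∀ y ∈ V, f x = f y)
    {R : X → X → ℝ}
    (hlub : ∀ x ∈ V, ∀ y ∈ V, x ≠ y → IsLUB (ratioSet V c x y) (R x y))
    (hdiag : ∀ x ∈ V, R x x = 0)
    {x y x' y' : X} (hx : x ∈ V) (hy : y ∈ V) (hx' : x' ∈ V) (hy' : y' ∈ V) :
    Real.sqrt (R x y)
      ≤ Real.sqrt (R x x') + Real.sqrt (R x' y') + Real.sqrt (R y' y) := by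
  have habs : ∀ (f : X → ℝ) (u : X), u ∈ V → ∀ w : X, w ∈ V →
      |f u - f w| ≤ Real.sqrt (R u w) * Real.sqrt (finsetEnergy V c f) := by
    intro f u hu w hw
    by_cases huw : u = w
    · subst huw
      simp only [sub_self, abs_zero]
      positivity
    · exact abs_sub_le_sqrt hnn hiff hu hw huw (hlub u hu w hw huw) f
  by_cases hxy : x = y
  · subst hxy
    rw [hdiag x hx, Real.sqrt_zero]
    positivity
  set S := Real.sqrt (R x x') + Real.sqrt (R x' y') + Real.sqrt (R y' y) with hS
  have hS0 : 0 ≤ S := by positivity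
  have hub : S ^ 2 ∈ upperBounds (ratioSet V c x y) := by
    rintro t ⟨f, hnc, rfl⟩
    have hE : 0 < finsetEnergy V c f := energy_pos hnn hiff hnc
    set E := finsetEnergy V c f with hEdef
    have h1 : |f x - f y| ≤ S * Real.sqrt E := by
      have ha := habs f x hx x' hx'
      have hb := habs f x' hx' y' hy'
      have hc := habs f y' hy' y hy
      have htri : |f x - f y| ≤ |f x - f x'| + |f x' - f y'| + |f y' - f y| := by
        have := abs_sub_le (f x) (f x') (f y)
        have := abs_sub_le (f x') (f y') (f y)
        linarith [abs_sub_le (f x) (f x') (f y), abs_sub_le (f x') (f y') (f y)]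
      rw [hS]
      calc |f x - f y| ≤ |f x - f x'| + |f x' - f y'| + |f y' - f y| := htri
        _ ≤ Real.sqrt (R x x') * Real.sqrt E + Real.sqrt (R x' y') * Real.sqrt E
            + Real.sqrt (R y' y) * Real.sqrt E := by linarith
        _ = (Real.sqrt (R x x') + Real.sqrt (R x' y') + Real.sqrt (R y' y)) * Real.sqrt E := by
            ring
    have h2 : (f x - f y) ^ 2 ≤ S ^ 2 * E := by
      have h3 : |f x - f y| ^ 2 ≤ (S * Real.sqrt E) ^ 2 := by
        apply pow_le_pow_left₀ (abs_nonneg _) h1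
      rw [sq_abs] at h3
      calc (f x - f y) ^ 2 ≤ (S * Real.sqrt E) ^ 2 := h3
        _ = S ^ 2 * (Real.sqrt E) ^ 2 := by ring
        _ = S ^ 2 * E := by rw [Real.sq_sqrt hE.le]
    rw [div_le_iff₀ hE]
    exact h2
  have hle := (hlub x hx y hy hxy).2 hub
  calc Real.sqrt (R x y) ≤ Real.sqrt (S ^ 2) := Real.sqrt_le_sqrt hle
    _ = S := Real.sqrt_sq hS0

lemma energy_tendsto {V : Finset X} {c : ℕ → X → X → ℝ} {cl : X → X → ℝ}
    {f : ℕ → X → ℝ} {fl : X → ℝ}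
    (hc : ∀ x ∈ V, ∀ y ∈ V, Tendsto (fun i => c i x y) atTop (𝓝 (cl x y)))
    (hf : ∀ x ∈ V, Tendsto (fun i => f i x) atTop (𝓝 (fl x))) :
    Tendsto (fun i => finsetEnergy V (c i) (f i)) atTop (𝓝 (finsetEnergy V cl fl)) := by
  unfold finsetEnergy
  apply Filter.Tendsto.const_mul
  apply tendsto_finset_sum
  intro x hx
  apply tendsto_finset_sum
  intro y hy
  exact (hc x hx y hy).mul (((hf x hx).sub (hf y hy)).pow 2)

end Aux

set_option maxHeartbeats 1600000 in
/-- Under setting (C1), if `R n` is a resistance metric on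
`A n` for each `n`, uniformly controlled by moduli `ψ₁, ψ₂`:
`ψ₁(d(x,y)) ≤ R n (x,y) ≤ ψ₂(d(x,y))`, then some subsequence `R_{n_k}`
converges (in the sense of `⇀`) to a resistance metric `R` on `A`, which
satisfies the same bounds. -/
theorem stmt6 {B : Type*} [MetricSpace B] [CompactSpace B]
    (A : ℕ → Set B) (Ainf : Set B)
    (hAc : ∀ n, IsCompact (A n)) (hAne : ∀ n, (A n).Nonempty)
    (hAinfc : IsCompact Ainf) (hAinfne : Ainf.Nonempty)
    (hH : Tendsto (fun n => Metric.hausdorffDist (A n) Ainf) atTop (𝓝 0))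
    (R : ℕ → B → B → ℝ) (hR : ∀ n, IsResistanceMetricOn (A n) (R n))
    (ψ₁ ψ₂ : ℝ → ℝ)
    (hψ₁c : ContinuousOn ψ₁ (Set.Ici 0)) (hψ₂c : ContinuousOn ψ₂ (Set.Ici 0))
    (hψ₁0 : ψ₁ 0 = 0) (hψ₂0 : ψ₂ 0 = 0)
    (hψpos : ∀ t : ℝ, 0 < t → 0 < ψ₁ t ∧ ψ₁ t ≤ ψ₂ t)
    (hbound : ∀ n, ∀ x ∈ A n, ∀ y ∈ A n,
      ψ₁ (dist x y) ≤ R n x y ∧ R n x y ≤ ψ₂ (dist x y)) :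
    ∃ Rlim : B → B → ℝ, IsResistanceMetricOn Ainf Rlim ∧
      (∀ x ∈ Ainf, ∀ y ∈ Ainf,
        ψ₁ (dist x y) ≤ Rlim x y ∧ Rlim x y ≤ ψ₂ (dist x y)) ∧
      ∃ φ : ℕ → ℕ, StrictMono φ ∧
        ∀ x ∈ Ainf, ∀ y ∈ Ainf, ∀ xs ys : ℕ → B,
          (∀ k, xs k ∈ A (φ k)) → (∀ k, ys k ∈ A (φ k)) →
          Tendsto xs atTop (𝓝 x) → Tendsto ys atTop (𝓝 y) →
          Tendsto (fun k => R (φ k) (xs k) (ys k)) atTop (𝓝 (Rlim x y)) := by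
  classical
  -- global distance bound
  obtain ⟨C, hC0, hC⟩ : ∃ C : ℝ, 0 ≤ C ∧ ∀ x y : B, dist x y ≤ C := by
    refine ⟨Metric.diam (Set.univ : Set B), Metric.diam_nonneg, fun x y => ?_⟩
    exact Metric.dist_le_diam_of_mem isCompact_univ.isBounded (Set.mem_univ x) (Set.mem_univ y)
  -- bound M on ψ₂ over [0, C]
  obtain ⟨M, hM0, hM⟩ : ∃ M : ℝ, 0 ≤ M ∧ ∀ t : ℝ, 0 ≤ t → t ≤ C → ψ₂ t ≤ M := by
    obtain ⟨t₀, ht₀, hmax⟩ := isCompact_Icc.exists_isMaxOn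
      (⟨0, by simp [hC0]⟩ : (Set.Icc (0:ℝ) C).Nonempty)
      (hψ₂c.mono (fun t ht => ht.1))
    exact ⟨max (ψ₂ t₀) 0, le_max_right _ _,
      fun t h1 h2 => le_trans (hmax (Set.mem_Icc.mpr ⟨h1, h2⟩)) (le_max_left _ _)⟩
  have hψ₁nn : ∀ t : ℝ, 0 ≤ t → 0 ≤ ψ₁ t := by
    intro t ht
    rcases eq_or_lt_of_le ht with h | h
    · rw [← h, hψ₁0]
    · exact (hψpos t h).1.le
  have hR0 : ∀ n, ∀ x ∈ A n, ∀ y ∈ A n, 0 ≤ R n x y := fun n x hx y hy =>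
    le_trans (hψ₁nn _ dist_nonneg) (hbound n x hx y hy).1
  have hRle : ∀ n, ∀ x ∈ A n, ∀ y ∈ A n, R n x y ≤ M := fun n x hx y hy =>
    le_trans (hbound n x hx y hy).2 (hM _ dist_nonneg (hC x y))
  have hdiag : ∀ n, ∀ x ∈ A n, R n x x = 0 := by
    intro n x hx
    have h := hbound n x hx x hx
    rw [dist_self, hψ₁0, hψ₂0] at h
    linarith [h.1, h.2]
  have hsymm : ∀ n, ∀ x ∈ A n, ∀ y ∈ A n, R n x y = R n y x := by
    intro n x hx y hy
    by_cases hxy : x = y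
    · rw [hxy]
    · obtain ⟨c, hcs, hcn, hci, hcl⟩ := hR n {x, y} (by
        intro z hz
        simp only [Finset.coe_insert, Finset.coe_singleton, Set.mem_insert_iff,
          Set.mem_singleton_iff] at hz
        rcases hz with rfl | rfl
        exacts [hx, hy])
      have hxm : x ∈ ({x, y} : Finset B) := by simp
      have hym : y ∈ ({x, y} : Finset B) := by simp
      have h1 : IsLUB (ratioSet ({x, y} : Finset B) c x y) (R n x y) :=
        hcl x hxm y hym hxy
      have h2 : IsLUB (ratioSet ({x, y} : Finset B) c y x) (R n y x) :=
        hcl y hym x hxm (Ne.symm hxy)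
      have hset : ratioSet ({x, y} : Finset B) c x y = ratioSet ({x, y} : Finset B) c y x := by
        ext t
        constructor
        · rintro ⟨f, hf, rfl⟩; exact ⟨f, hf, by ring_nf⟩
        · rintro ⟨f, hf, rfl⟩; exact ⟨f, hf, by ring_nf⟩
      rw [hset] at h1
      exact h1.unique h2
  have hquad : ∀ n, ∀ x ∈ A n, ∀ y ∈ A n, ∀ x' ∈ A n, ∀ y' ∈ A n,
      Real.sqrt (R n x y)
        ≤ Real.sqrt (R n x x') + Real.sqrt (R n x' y') + Real.sqrt (R n y' y) := by
    intro n x hx y hy x' hx' y' hy'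
    have hVsub : ↑({x, y, x', y'} : Finset B) ⊆ A n := by
      intro z hz
      simp only [Finset.coe_insert, Finset.coe_singleton, Set.mem_insert_iff,
        Set.mem_singleton_iff] at hz
      rcases hz with rfl | rfl | rfl | rfl
      exacts [hx, hy, hx', hy']
    obtain ⟨c, hcs, hcn, hci, hcl⟩ := hR n {x, y, x', y'} hVsub
    exact sqrt_quad hcn hci (fun a ha b hb hab => hcl a ha b hb hab)
      (fun a ha => hdiag n a (hVsub ha))
      (by simp) (by simp) (by simp) (by simp)
  have hcmp : ∀ n, ∀ x ∈ A n, ∀ y ∈ A n, ∀ x' ∈ A n, ∀ y' ∈ A n,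
      |R n x y - R n x' y'| ≤ 4 * Real.sqrt M *
        (Real.sqrt (ψ₂ (dist x x')) + Real.sqrt (ψ₂ (dist y y'))) := by
    intro n x hx y hy x' hx' y' hy'
    have ha0 : 0 ≤ R n x y := hR0 n x hx y hy
    have hb0 : 0 ≤ R n x' y' := hR0 n x' hx' y' hy'
    set s := Real.sqrt (R n x x') + Real.sqrt (R n y' y) with hs
    have hs0 : 0 ≤ s := by positivity
    have h1 : Real.sqrt (R n x y) ≤ s + Real.sqrt (R n x' y') := by
      have h := hquad n x hx y hy x' hx' y' hy'
      rw [hs]; linarith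
    have h2 : Real.sqrt (R n x' y') ≤ s + Real.sqrt (R n x y) := by
      have h := hquad n x' hx' y' hy' x hx y hy
      rw [hsymm n x' hx' x hx, hsymm n y hy y' hy'] at h
      rw [hs]; linarith
    have hsqm : ∀ z, z ∈ A n → ∀ w, w ∈ A n → Real.sqrt (R n z w) ≤ Real.sqrt M :=
      fun z hz w hw => Real.sqrt_le_sqrt (hRle n z hz w hw)
    have hsM : s ≤ 2 * Real.sqrt M := by
      have e1 := hsqm x hx x' hx'
      have e2 := hsqm y' hy' y hy
      rw [hs]; linarith
    have haM : Real.sqrt (R n x y) ≤ Real.sqrt M := hsqm x hx y hy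
    have hbM : Real.sqrt (R n x' y') ≤ Real.sqrt M := hsqm x' hx' y' hy'
    have ea : R n x y = (Real.sqrt (R n x y)) ^ 2 := (Real.sq_sqrt ha0).symm
    have eb : R n x' y' = (Real.sqrt (R n x' y')) ^ 2 := (Real.sq_sqrt hb0).symm
    have key : |R n x y - R n x' y'| ≤ 4 * Real.sqrt M * s := by
      have p1 : (Real.sqrt (R n x y)) ^ 2 ≤ (s + Real.sqrt (R n x' y')) ^ 2 :=
        pow_le_pow_left₀ (Real.sqrt_nonneg _) h1 2
      have p2 : (Real.sqrt (R n x' y')) ^ 2 ≤ (s + Real.sqrt (R n x y)) ^ 2 :=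
        pow_le_pow_left₀ (Real.sqrt_nonneg _) h2 2
      have q1 : s * Real.sqrt (R n x' y') ≤ s * Real.sqrt M :=
        mul_le_mul_of_nonneg_left hbM hs0
      have q2 : s * Real.sqrt (R n x y) ≤ s * Real.sqrt M :=
        mul_le_mul_of_nonneg_left haM hs0
      have q3 : s * s ≤ 2 * Real.sqrt M * s :=
        mul_le_mul_of_nonneg_right hsM hs0
      rw [abs_le]
      constructor
      · nlinarith [p2, q2, q3]
      · nlinarith [p1, q1, q3]
    have hsψ : s ≤ Real.sqrt (ψ₂ (dist x x')) + Real.sqrt (ψ₂ (dist y y')) := by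
      have e1 : Real.sqrt (R n x x') ≤ Real.sqrt (ψ₂ (dist x x')) :=
        Real.sqrt_le_sqrt (hbound n x hx x' hx').2
      have e2 : Real.sqrt (R n y' y) ≤ Real.sqrt (ψ₂ (dist y y')) := by
        have h := (hbound n y' hy' y hy).2
        rw [dist_comm y' y] at h
        exact Real.sqrt_le_sqrt h
      rw [hs]; linarith
    calc |R n x y - R n x' y'| ≤ 4 * Real.sqrt M * s := key
      _ ≤ 4 * Real.sqrt M * (Real.sqrt (ψ₂ (dist x x')) + Real.sqrt (ψ₂ (dist y y'))) := by
          apply mul_le_mul_of_nonneg_left hsψ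
          positivity
  -- nearest point projections
  have hproj : ∀ n (x : B), ∃ y ∈ A n, Metric.infDist x (A n) = dist x y :=
    fun n x => (hAc n).exists_infDist_eq_dist (hAne n) x
  choose π hπmem hπdist using hproj
  have hedist : ∀ n, EMetric.hausdorffEdist Ainf (A n) ≠ ⊤ := fun n =>
    Metric.hausdorffEdist_ne_top_of_nonempty_of_bounded hAinfne (hAne n)
      hAinfc.isBounded (hAc n).isBounded
  have hπclose : ∀ n, ∀ x ∈ Ainf, dist x (π n x) ≤ Metric.hausdorffDist (A n) Ainf := by
    intro n x hx
    rw [← hπdist n x, Metric.hausdorffDist_comm]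
    exact Metric.infDist_le_hausdorffDist_of_mem hx (hedist n)
  have hπgen : ∀ n (x : B), dist x (π n x) = Metric.infDist x (A n) :=
    fun n x => (hπdist n x).symm
  set hd : ℕ → ℝ := fun n => Metric.hausdorffDist (A n) Ainf with hhddef
  have hd0 : ∀ n, 0 ≤ hd n := fun n => Metric.hausdorffDist_nonneg
  -- dense sequence
  have hBne : Nonempty B := ⟨hAinfne.choose⟩
  set e : ℕ → B := TopologicalSpace.denseSeq B with hedef
  have he : ∀ (x : B) (δ : ℝ), 0 < δ → ∃ k, dist x (e k) < δ := by
    intro x δ hδ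
    have hdr := TopologicalSpace.denseRange_denseSeq B
    obtain ⟨y, hy, hyd⟩ := Metric.mem_closure_iff.mp (hdr x) δ hδ
    obtain ⟨k, rfl⟩ := hy
    exact ⟨k, hyd⟩
  -- subsequence extraction along the countable dense family
  set F : ℕ → (ℕ × ℕ) → ℝ := fun n p => R n (π n (e p.1)) (π n (e p.2)) with hFdef
  have hFS : ∀ n, F n ∈ Set.univ.pi (fun _ : ℕ × ℕ => Set.Icc (0:ℝ) M) := by
    intro n
    rw [Set.mem_univ_pi]
    intro p
    exact ⟨hR0 n _ (hπmem n _) _ (hπmem n _), hRle n _ (hπmem n _) _ (hπmem n _)⟩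
  obtain ⟨L, -, φ, hφ, hLconv⟩ :=
    (isCompact_univ_pi fun _ : ℕ × ℕ => isCompact_Icc).tendsto_subseq hFS
  have hL : ∀ k l : ℕ, Tendsto (fun j => R (φ j) (π (φ j) (e k)) (π (φ j) (e l)))
      atTop (𝓝 (L (k, l))) := fun k l => tendsto_pi_nhds.mp hLconv (k, l)
  -- modulus facts
  have hmod : ∀ ε : ℝ, 0 < ε → ∃ δ : ℝ, 0 < δ ∧ ∀ t : ℝ, 0 ≤ t → t < δ → ψ₂ t < ε := by
    intro ε hε
    have hcw : Tendsto ψ₂ (𝓝[Set.Ici 0] 0) (𝓝 0) := by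
      have h := (hψ₂c 0 (Set.mem_Ici.mpr le_rfl)).tendsto
      rwa [hψ₂0] at h
    rw [Metric.tendsto_nhdsWithin_nhds] at hcw
    obtain ⟨δ, hδ0, hδ⟩ := hcw ε hε
    refine ⟨δ, hδ0, fun t ht htδ => ?_⟩
    have h := hδ ht (by rwa [Real.dist_eq, sub_zero, abs_of_nonneg ht])
    rw [Real.dist_eq, sub_zero] at h
    exact lt_of_le_of_lt (le_abs_self _) h
  have hΦ : ∀ d : ℕ → ℝ, (∀ j, 0 ≤ d j) → Tendsto d atTop (𝓝 0) →
      Tendsto (fun j => Real.sqrt (ψ₂ (d j))) atTop (𝓝 0) := by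
    intro d hdnn hdt
    have h2 : Tendsto d atTop (𝓝[Set.Ici 0] 0) :=
      tendsto_nhdsWithin_of_tendsto_nhds_of_eventually_within d hdt
        (Filter.Eventually.of_forall hdnn)
    have hcw : ContinuousWithinAt ψ₂ (Set.Ici 0) 0 := hψ₂c 0 (Set.mem_Ici.mpr le_rfl)
    have h1 := hcw.tendsto.comp h2
    rw [hψ₂0] at h1
    have h3 := (Real.continuous_sqrt.tendsto 0).comp h1
    rwa [Real.sqrt_zero] at h3
  have hhdφ : Tendsto (fun j => hd (φ j)) atTop (𝓝 0) := hH.comp hφ.tendsto_atTop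
  -- the candidate limit function
  set u : B → B → ℕ → ℝ := fun x y j => R (φ j) (π (φ j) x) (π (φ j) y) with hudef
  have hcauchy : ∀ x ∈ Ainf, ∀ y ∈ Ainf, CauchySeq (u x y) := by
    intro x hx y hy
    rw [Metric.cauchySeq_iff]
    intro ε hε
    set K : ℝ := 8 * Real.sqrt M + 1 with hK
    have hK0 : 0 < K := by positivity
    obtain ⟨δ, hδ0, hδ⟩ := hmod ((ε / (3 * K)) ^ 2) (by positivity)
    obtain ⟨k, hk⟩ := he x (δ / 4) (by positivity)
    obtain ⟨l, hl⟩ := he y (δ / 4) (by positivity)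
    obtain ⟨J₁, hJ₁⟩ := eventually_atTop.mp
      (Filter.Tendsto.eventually_lt_const (show (0:ℝ) < δ / 4 by positivity) hhdφ)
    have hacauchy : CauchySeq (fun j => F (φ j) (k, l)) := (hL k l).cauchySeq
    obtain ⟨J₂, hJ₂⟩ := (Metric.cauchySeq_iff.mp hacauchy) (ε / 3) (by positivity)
    refine ⟨max J₁ J₂, fun j hj j' hj' => ?_⟩
    have hclose : ∀ i, J₁ ≤ i → |u x y i - F (φ i) (k, l)| ≤ ε / 3 := by
      intro i hi
      have hdi : hd (φ i) < δ / 4 := hJ₁ i hi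
      have hdist1 : dist (π (φ i) x) (π (φ i) (e k)) < δ := by
        have t1 : dist (π (φ i) x) x ≤ hd (φ i) := by
          rw [dist_comm]; exact hπclose (φ i) x hx
        have t2 : dist (e k) (π (φ i) (e k)) ≤ hd (φ i) + δ / 4 := by
          rw [hπgen]
          calc Metric.infDist (e k) (A (φ i))
              ≤ Metric.infDist x (A (φ i)) + dist (e k) x :=
                Metric.infDist_le_infDist_add_dist
            _ ≤ hd (φ i) + δ / 4 := by
                have := hπclose (φ i) x hx
                rw [hπgen (φ i) x] at this
                have hxk : dist (e k) x < δ / 4 := by rw [dist_comm]; exact hk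
                linarith
        calc dist (π (φ i) x) (π (φ i) (e k))
            ≤ dist (π (φ i) x) x + dist x (e k) + dist (e k) (π (φ i) (e k)) :=
              dist_triangle4 _ _ _ _
          _ < δ := by linarith
      have hdist2 : dist (π (φ i) y) (π (φ i) (e l)) < δ := by
        have t1 : dist (π (φ i) y) y ≤ hd (φ i) := by
          rw [dist_comm]; exact hπclose (φ i) y hy
        have t2 : dist (e l) (π (φ i) (e l)) ≤ hd (φ i) + δ / 4 := by
          rw [hπgen]
          calc Metric.infDist (e l) (A (φ i))
              ≤ Metric.infDist y (A (φ i)) + dist (e l) y :=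
                Metric.infDist_le_infDist_add_dist
            _ ≤ hd (φ i) + δ / 4 := by
                have := hπclose (φ i) y hy
                rw [hπgen (φ i) y] at this
                have hyl : dist (e l) y < δ / 4 := by rw [dist_comm]; exact hl
                linarith
        calc dist (π (φ i) y) (π (φ i) (e l))
            ≤ dist (π (φ i) y) y + dist y (e l) + dist (e l) (π (φ i) (e l)) :=
              dist_triangle4 _ _ _ _
          _ < δ := by linarith
      have hb1 : Real.sqrt (ψ₂ (dist (π (φ i) x) (π (φ i) (e k)))) ≤ ε / (3 * K) := by
        have := hδ _ dist_nonneg hdist1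
        calc Real.sqrt (ψ₂ (dist (π (φ i) x) (π (φ i) (e k))))
            ≤ Real.sqrt ((ε / (3 * K)) ^ 2) := Real.sqrt_le_sqrt this.le
          _ = ε / (3 * K) := Real.sqrt_sq (by positivity)
      have hb2 : Real.sqrt (ψ₂ (dist (π (φ i) y) (π (φ i) (e l)))) ≤ ε / (3 * K) := by
        have := hδ _ dist_nonneg hdist2
        calc Real.sqrt (ψ₂ (dist (π (φ i) y) (π (φ i) (e l))))
            ≤ Real.sqrt ((ε / (3 * K)) ^ 2) := Real.sqrt_le_sqrt this.le
          _ = ε / (3 * K) := Real.sqrt_sq (by positivity)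
      have hcm := hcmp (φ i) (π (φ i) x) (hπmem _ _) (π (φ i) y) (hπmem _ _)
        (π (φ i) (e k)) (hπmem _ _) (π (φ i) (e l)) (hπmem _ _)
      have hfin : 4 * Real.sqrt M *
          (Real.sqrt (ψ₂ (dist (π (φ i) x) (π (φ i) (e k))))
            + Real.sqrt (ψ₂ (dist (π (φ i) y) (π (φ i) (e l))))) ≤ ε / 3 := by
        have h8 : (8 : ℝ) * Real.sqrt M ≤ K := by rw [hK]; linarith
        have hεK : 0 ≤ ε / (3 * K) := by positivity
        calc 4 * Real.sqrt M *
            (Real.sqrt (ψ₂ (dist (π (φ i) x) (π (φ i) (e k))))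
              + Real.sqrt (ψ₂ (dist (π (φ i) y) (π (φ i) (e l)))))
            ≤ 4 * Real.sqrt M * (ε / (3 * K) + ε / (3 * K)) := by
              apply mul_le_mul_of_nonneg_left (by linarith) (by positivity)
          _ = 8 * Real.sqrt M * (ε / (3 * K)) := by ring
          _ ≤ K * (ε / (3 * K)) := mul_le_mul_of_nonneg_right h8 hεK
          _ = ε / 3 := by field_simp
      exact le_trans hcm hfin
    have h1 := hclose j (le_trans (le_max_left _ _) hj)
    have h2 := hclose j' (le_trans (le_max_left _ _) hj')
    have h3 := hJ₂ j (le_trans (le_max_right _ _) hj) j' (le_trans (le_max_right _ _) hj')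
    rw [Real.dist_eq] at h3 ⊢
    have habs := abs_sub_le (u x y j) (F (φ j) (k, l)) (u x y j')
    have habs2 := abs_sub_le (F (φ j) (k, l)) (F (φ j') (k, l)) (u x y j')
    have e1 : |F (φ j') (k, l) - u x y j'| = |u x y j' - F (φ j') (k, l)| := abs_sub_comm _ _
    rw [e1] at habs2
    linarith
  set RL : B → B → ℝ := fun x y => limUnder atTop (u x y) with hRLdef
  have hulim : ∀ x ∈ Ainf, ∀ y ∈ Ainf, Tendsto (u x y) atTop (𝓝 (RL x y)) := by
    intro x hx y hy
    obtain ⟨a, ha⟩ := cauchySeq_tendsto_of_complete (hcauchy x hx y hy)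
    have : RL x y = a := ha.limUnder_eq
    rwa [this]
  have hπt : ∀ x ∈ Ainf, Tendsto (fun j => π (φ j) x) atTop (𝓝 x) := by
    intro x hx
    rw [tendsto_iff_dist_tendsto_zero]
    apply squeeze_zero (fun j => dist_nonneg) (fun j => ?_) hhdφ
    rw [dist_comm]
    exact hπclose (φ j) x hx
  have hgen : ∀ x ∈ Ainf, ∀ y ∈ Ainf, ∀ xs ys : ℕ → B,
      (∀ k, xs k ∈ A (φ k)) → (∀ k, ys k ∈ A (φ k)) →
      Tendsto xs atTop (𝓝 x) → Tendsto ys atTop (𝓝 y) →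
      Tendsto (fun k => R (φ k) (xs k) (ys k)) atTop (𝓝 (RL x y)) := by
    intro x hx y hy xs ys hxs hys hxst hyst
    have hd1 : Tendsto (fun j => dist (xs j) (π (φ j) x)) atTop (𝓝 0) := by
      apply squeeze_zero (fun j => dist_nonneg) (fun j => ?_)
        (by simpa using ((tendsto_iff_dist_tendsto_zero.mp hxst).add hhdφ))
      calc dist (xs j) (π (φ j) x) ≤ dist (xs j) x + dist x (π (φ j) x) :=
            dist_triangle _ _ _
        _ ≤ dist (xs j) x + hd (φ j) := by linarith [hπclose (φ j) x hx]
    have hd2 : Tendsto (fun j => dist (ys j) (π (φ j) y)) atTop (𝓝 0) := by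
      apply squeeze_zero (fun j => dist_nonneg) (fun j => ?_)
        (by simpa using ((tendsto_iff_dist_tendsto_zero.mp hyst).add hhdφ))
      calc dist (ys j) (π (φ j) y) ≤ dist (ys j) y + dist y (π (φ j) y) :=
            dist_triangle _ _ _
        _ ≤ dist (ys j) y + hd (φ j) := by linarith [hπclose (φ j) y hy]
    have hdiff : Tendsto (fun j => R (φ j) (xs j) (ys j) - u x y j) atTop (𝓝 0) := by
      apply squeeze_zero_norm (a := fun j => 4 * Real.sqrt M *
        (Real.sqrt (ψ₂ (dist (xs j) (π (φ j) x))) + Real.sqrt (ψ₂ (dist (ys j) (π (φ j) y)))))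
      · intro j
        exact hcmp (φ j) (xs j) (hxs j) (ys j) (hys j) (π (φ j) x) (hπmem _ _)
          (π (φ j) y) (hπmem _ _)
      · have := ((hΦ _ (fun j => dist_nonneg) hd1).add
          (hΦ _ (fun j => dist_nonneg) hd2)).const_mul (4 * Real.sqrt M)
        simpa using this
    have := hdiff.add (hulim x hx y hy)
    simpa using this
  have hbounds : ∀ x ∈ Ainf, ∀ y ∈ Ainf,
      ψ₁ (dist x y) ≤ RL x y ∧ RL x y ≤ ψ₂ (dist x y) := by
    intro x hx y hy
    have hdt : Tendsto (fun j => dist (π (φ j) x) (π (φ j) y)) atTop (𝓝 (dist x y)) :=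
      (hπt x hx).dist (hπt y hy)
    have hdtw : Tendsto (fun j => dist (π (φ j) x) (π (φ j) y)) atTop
        (𝓝[Set.Ici 0] (dist x y)) :=
      tendsto_nhdsWithin_of_tendsto_nhds_of_eventually_within _ hdt
        (Filter.Eventually.of_forall fun j => dist_nonneg)
    have h1 : Tendsto (fun j => ψ₁ (dist (π (φ j) x) (π (φ j) y))) atTop
        (𝓝 (ψ₁ (dist x y))) := ((hψ₁c (dist x y) dist_nonneg).tendsto).comp hdtw
    have h2 : Tendsto (fun j => ψ₂ (dist (π (φ j) x) (π (φ j) y))) atTop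
        (𝓝 (ψ₂ (dist x y))) := ((hψ₂c (dist x y) dist_nonneg).tendsto).comp hdtw
    constructor
    · exact le_of_tendsto_of_tendsto' h1 (hulim x hx y hy)
        (fun j => (hbound (φ j) _ (hπmem _ _) _ (hπmem _ _)).1)
    · exact le_of_tendsto_of_tendsto' (hulim x hx y hy) h2
        (fun j => (hbound (φ j) _ (hπmem _ _) _ (hπmem _ _)).2)
  have hres : IsResistanceMetricOn Ainf RL := by
    intro V hV
    by_cases hVcard : V.card ≤ 1
    · refine ⟨fun _ _ => 0, fun _ _ => rfl, fun _ _ => le_rfl, ?_, ?_⟩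
      · intro f
        constructor
        · intro _ a ha b hb
          rw [Finset.card_le_one.mp hVcard a ha b hb]
        · intro _
          simp [finsetEnergy]
      · intro a ha b hb hab
        exact absurd (Finset.card_le_one.mp hVcard a ha b hb) hab
    push_neg at hVcard
    obtain ⟨x₀, hx₀, y₀, hy₀, hx₀y₀⟩ := Finset.one_lt_card.mp hVcard
    obtain ⟨ε₀, hε₀, hsep⟩ : ∃ ε₀ : ℝ, 0 < ε₀ ∧ ∀ a ∈ V, ∀ b ∈ V, a ≠ b → ε₀ ≤ dist a b := by
      obtain ⟨p, hp, hpmin⟩ := Finset.exists_min_image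
        ((V ×ˢ V).filter (fun p => p.1 ≠ p.2)) (fun p => dist p.1 p.2)
        ⟨(x₀, y₀), by simp [Finset.mem_filter, Finset.mem_product, hx₀, hy₀, hx₀y₀]⟩
      rw [Finset.mem_filter, Finset.mem_product] at hp
      refine ⟨dist p.1 p.2, dist_pos.mpr hp.2, fun a ha b hb hab => ?_⟩
      exact hpmin (a, b) (by simp [Finset.mem_filter, Finset.mem_product, ha, hb, hab])
    obtain ⟨J₀, hJ₀⟩ := eventually_atTop.mp
      (Filter.Tendsto.eventually_lt_const (show (0:ℝ) < ε₀ / 4 by positivity) hhdφ)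
    set m : ℕ → ℕ := fun j => φ (j + J₀) with hmdef
    set w : ℕ → B → B := fun j x => π (m j) x with hwdef
    have hwmem : ∀ j x, w j x ∈ A (m j) := fun j x => hπmem _ _
    have hwd : ∀ j, ∀ a ∈ V, dist a (w j a) < ε₀ / 4 := by
      intro j a ha
      exact lt_of_le_of_lt (hπclose (m j) a (hV ha)) (hJ₀ (j + J₀) (by omega))
    have hwsep : ∀ j, ∀ a ∈ V, ∀ b ∈ V, a ≠ b → ε₀ / 2 ≤ dist (w j a) (w j b) := by
      intro j a ha b hb hab
      have h1 := hwd j a ha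
      have h2 := hwd j b hb
      have h3 := hsep a ha b hb hab
      have h4 : dist a b ≤ dist a (w j a) + dist (w j a) (w j b) + dist (w j b) b :=
        dist_triangle4 _ _ _ _
      rw [dist_comm (w j b) b] at h4
      linarith
    have hwinj : ∀ j, ∀ a ∈ V, ∀ b ∈ V, w j a = w j b → a = b := by
      intro j a ha b hb hwab
      by_contra hab
      have h5 := hwsep j a ha b hb hab
      rw [hwab, dist_self] at h5
      linarith
    obtain ⟨ρ, hρ0, hρ⟩ : ∃ ρ : ℝ, 0 < ρ ∧ ∀ t : ℝ, ε₀ / 2 ≤ t → t ≤ C → ρ ≤ ψ₁ t := by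
      obtain ⟨t₀, ht₀, hmin⟩ := isCompact_Icc.exists_isMinOn
        (⟨ε₀ / 2, Set.mem_Icc.mpr ⟨le_rfl, le_trans (by linarith) (le_max_right C ε₀)⟩⟩ :
          (Set.Icc (ε₀/2) (max C ε₀)).Nonempty)
        (hψ₁c.mono (fun t ht => Set.mem_Ici.mpr (le_trans (by positivity) ht.1)))
      refine ⟨ψ₁ t₀, (hψpos t₀ (lt_of_lt_of_le (by positivity) (Set.mem_Icc.mp ht₀).1)).1,
        fun t h1 h2 => ?_⟩
      exact hmin (Set.mem_Icc.mpr ⟨h1, le_trans h2 (le_max_left C ε₀)⟩)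
    have hRlow : ∀ j, ∀ a ∈ V, ∀ b ∈ V, a ≠ b → ρ ≤ R (m j) (w j a) (w j b) := by
      intro j a ha b hb hab
      have h1 := (hbound (m j) _ (hwmem j a) _ (hwmem j b)).1
      have h2 := hρ (dist (w j a) (w j b)) (hwsep j a ha b hb hab) (hC _ _)
      linarith
    have himgsub : ∀ j, ↑(V.image (w j)) ⊆ A (m j) := by
      intro j z hz
      simp only [Finset.coe_image, Set.mem_image, Finset.mem_coe] at hz
      obtain ⟨a, ha, rfl⟩ := hz
      exact hwmem j a
    choose c hcsym hcnn hciff hclub using fun j => hR (m j) (V.image (w j)) (himgsub j)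
    set cc2 : ℕ → B → B → ℝ := fun j a b => if a = b then 0 else c j (w j a) (w j b) with hcc2def
    have hcc2sym : ∀ j a b, cc2 j a b = cc2 j b a := by
      intro j a b
      by_cases hab : a = b
      · subst hab; rfl
      · simp [hcc2def, hab, Ne.symm hab, hcsym j (w j a) (w j b)]
    have hcc2nn : ∀ j a b, 0 ≤ cc2 j a b := by
      intro j a b
      by_cases hab : a = b <;> simp [hcc2def, hab, hcnn j _ _]
    have hcc2le : ∀ j, ∀ a ∈ V, ∀ b ∈ V, cc2 j a b ≤ ρ⁻¹ := by
      intro j a ha b hb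
      by_cases hab : a = b
      · simp only [hcc2def, hab, if_pos rfl]
        positivity
      · have hmem1 : w j a ∈ V.image (w j) := Finset.mem_image_of_mem _ ha
        have hmem2 : w j b ∈ V.image (w j) := Finset.mem_image_of_mem _ hb
        have hne : w j a ≠ w j b := fun hh => hab (hwinj j a ha b hb hh)
        have h6 := conductance_le (hcsym j) (hcnn j) (hciff j) hmem1 hmem2 hne
          (hclub j _ hmem1 _ hmem2 hne) hρ0 (hRlow j a ha b hb hab)
        simpa [hcc2def, hab] using h6
    have hEtrans : ∀ j (g : B → ℝ),
        finsetEnergy (V.image (w j)) (c j) g = finsetEnergy V (cc2 j) (fun a => g (w j a)) := by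
      intro j g
      rw [energy_image (fun a ha b hb => hwinj j a ha b hb) (c j) g]
      exact energy_offdiag_congr (fun a b hab => by simp [hcc2def, hab]) _
    set r : ℕ → B → B := fun j => Function.invFunOn (w j) ↑V with hrdef
    have hrw : ∀ j, ∀ a ∈ V, r j (w j a) = a := by
      intro j a ha
      exact Set.InjOn.leftInvOn_invFunOn
        (fun p hp q hq hh => hwinj j p (Finset.mem_coe.mp hp) q (Finset.mem_coe.mp hq) hh)
        (Finset.mem_coe.mpr ha)
    have hEtrans2 : ∀ j (f : B → ℝ),
        finsetEnergy V (cc2 j) f = finsetEnergy (V.image (w j)) (c j) (fun z => f (r j z)) := by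
      intro j f
      rw [hEtrans j (fun z => f (r j z))]
      exact energy_congr (fun a ha => by rw [hrw j a ha])
    set G : ℕ → (↥V × ↥V) → ℝ := fun j p => cc2 j p.1.1 p.2.1 with hGdef
    have hGS : ∀ j, G j ∈ Set.univ.pi (fun _ : ↥V × ↥V => Set.Icc (0:ℝ) ρ⁻¹) := by
      intro j
      rw [Set.mem_univ_pi]
      intro p
      exact ⟨hcc2nn j _ _, hcc2le j _ p.1.2 _ p.2.2⟩
    obtain ⟨cl, -, ζ, hζ, hclconv⟩ :=
      (isCompact_univ_pi fun _ : ↥V × ↥V => isCompact_Icc).tendsto_subseq hGS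
    set cinf : B → B → ℝ :=
      fun a b => if hh : a ∈ V ∧ b ∈ V then cl (⟨a, hh.1⟩, ⟨b, hh.2⟩) else 0 with hcinfdef
    have hclc : ∀ a, a ∈ V → ∀ b, b ∈ V →
        Tendsto (fun i => cc2 (ζ i) a b) atTop (𝓝 (cinf a b)) := by
      intro a ha b hb
      have hh := tendsto_pi_nhds.mp hclconv (⟨a, ha⟩, ⟨b, hb⟩)
      have he2 : cinf a b = cl (⟨a, ha⟩, ⟨b, hb⟩) := by
        rw [hcinfdef]
        simp [ha, hb]
      rw [he2]
      exact hh
    have hcinfsym : ∀ a b, cinf a b = cinf b a := by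
      intro a b
      by_cases hab : a ∈ V ∧ b ∈ V
      · have h1 := hclc a hab.1 b hab.2
        have h2 := hclc b hab.2 a hab.1
        have heq : (fun i => cc2 (ζ i) b a) = fun i => cc2 (ζ i) a b :=
          funext fun i => (hcc2sym (ζ i) a b).symm
        rw [heq] at h2
        exact tendsto_nhds_unique h1 h2
      · have hab' : ¬(b ∈ V ∧ a ∈ V) := fun hh => hab ⟨hh.2, hh.1⟩
        simp [hcinfdef, hab, hab']
    have hcinfnn : ∀ a b, 0 ≤ cinf a b := by
      intro a b
      by_cases hab : a ∈ V ∧ b ∈ V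
      · exact le_of_tendsto_of_tendsto' tendsto_const_nhds (hclc a hab.1 b hab.2)
          (fun i => hcc2nn _ _ _)
      · simp [hcinfdef, hab]
    have hEconv : ∀ f : B → ℝ, Tendsto (fun i => finsetEnergy V (cc2 (ζ i)) f) atTop
        (𝓝 (finsetEnergy V cinf f)) := fun f =>
      energy_tendsto (fun a ha b hb => hclc a ha b hb) (fun a ha => tendsto_const_nhds)
    have hRconv : ∀ a ∈ V, ∀ b ∈ V,
        Tendsto (fun i => R (m (ζ i)) (w (ζ i) a) (w (ζ i) b)) atTop (𝓝 (RL a b)) := by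
      intro a ha b hb
      exact (hulim a (hV ha) b (hV hb)).comp
        (tendsto_atTop_mono (fun i => Nat.le_add_right (ζ i) J₀) hζ.tendsto_atTop)
    have hsq : ∀ i (f : B → ℝ), ∀ a ∈ V, ∀ b ∈ V, a ≠ b →
        (f a - f b) ^ 2 ≤ R (m (ζ i)) (w (ζ i) a) (w (ζ i) b) * finsetEnergy V (cc2 (ζ i)) f := by
      intro i f a ha b hb hab
      have hma : w (ζ i) a ∈ V.image (w (ζ i)) := Finset.mem_image_of_mem _ ha
      have hmb : w (ζ i) b ∈ V.image (w (ζ i)) := Finset.mem_image_of_mem _ hb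
      have hne : w (ζ i) a ≠ w (ζ i) b := fun hh => hab (hwinj _ a ha b hb hh)
      have hh := sq_le_of_isLUB (hcnn (ζ i)) (hciff (ζ i)) hma hmb hne
        (hclub (ζ i) _ hma _ hmb hne) (fun z => f (r (ζ i) z))
      rw [hrw (ζ i) a ha, hrw (ζ i) b hb, ← hEtrans2 (ζ i) f] at hh
      exact hh
    have hiffinf : ∀ f : B → ℝ,
        finsetEnergy V cinf f = 0 ↔ ∀ a ∈ V, ∀ b ∈ V, f a = f b := by
      intro f
      constructor
      · intro hE0
        by_contra hnc
        push_neg at hnc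
        obtain ⟨a, ha, b, hb, hab⟩ := hnc
        have habne : a ≠ b := fun hh => hab (by rw [hh])
        have hEc := hEconv f
        rw [hE0] at hEc
        have hkey : ∀ i, (f a - f b) ^ 2 ≤ M * finsetEnergy V (cc2 (ζ i)) f := by
          intro i
          have h1 := hsq i f a ha b hb habne
          have hRM := hRle (m (ζ i)) _ (hwmem _ a) _ (hwmem _ b)
          have hE0' : 0 ≤ finsetEnergy V (cc2 (ζ i)) f := energy_nonneg _ _ (hcc2nn (ζ i)) f
          nlinarith
        have hlim : Tendsto (fun i => M * finsetEnergy V (cc2 (ζ i)) f) atTop (𝓝 0) := by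
          simpa using hEc.const_mul M
        have h3 : (f a - f b) ^ 2 ≤ 0 :=
          le_of_tendsto_of_tendsto' tendsto_const_nhds hlim (fun i => hkey i)
        have h4 : (f a - f b) ^ 2 = 0 := le_antisymm h3 (sq_nonneg _)
        exact hab (sub_eq_zero.mp (pow_eq_zero_iff two_ne_zero |>.mp h4))
      · intro hcon
        have hz : ∑ a ∈ V, ∑ b ∈ V, cinf a b * (f a - f b) ^ 2 = 0 :=
          Finset.sum_eq_zero fun a ha => Finset.sum_eq_zero fun b hb => by
            rw [hcon a ha b hb]; ring
        simp only [finsetEnergy]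
        rw [hz, mul_zero]
    refine ⟨cinf, hcinfsym, hcinfnn, hiffinf, ?_⟩
    intro x hxV y hyV hxy
    constructor
    · rintro t ⟨f, hfnc, rfl⟩
      have hEpos : 0 < finsetEnergy V cinf f := energy_pos hcinfnn hiffinf hfnc
      rw [div_le_iff₀ hEpos]
      have hprod : Tendsto
          (fun i => R (m (ζ i)) (w (ζ i) x) (w (ζ i) y) * finsetEnergy V (cc2 (ζ i)) f)
          atTop (𝓝 (RL x y * finsetEnergy V cinf f)) := (hRconv x hxV y hyV).mul (hEconv f)
      exact le_of_tendsto_of_tendsto' tendsto_const_nhds hprod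
        (fun i => hsq i f x hxV y hyV hxy)
    · intro b hb
      have hRLpos : 0 < RL x y := by
        have h1 := (hbounds x (hV hxV) y (hV hyV)).1
        have h2 := (hψpos (dist x y) (dist_pos.mpr hxy)).1
        linarith
      have hb0 : 0 ≤ b := by
        have hnc : ¬∀ a ∈ V, ∀ b' ∈ V,
            (fun z : B => if z = x then (1:ℝ) else 0) a
              = (fun z : B => if z = x then (1:ℝ) else 0) b' := by
          intro hcon
          have hh := hcon x hxV y hyV
          simp [hxy, Ne.symm hxy] at hh
        have hEp : 0 < finsetEnergy V cinf (fun z : B => if z = x then (1:ℝ) else 0) :=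
          energy_pos hcinfnn hiffinf hnc
        exact le_trans (div_nonneg (sq_nonneg _) hEp.le)
          (hb ⟨(fun z : B => if z = x then (1:ℝ) else 0), hnc, rfl⟩)
      have hkey : ∀ ε : ℝ, 0 < ε → ε < RL x y → RL x y ≤ b + ε := by
        intro ε hε hεR
        have hex : ∀ i, ∃ g : B → ℝ,
            (¬∀ p ∈ V.image (w (ζ i)), ∀ q ∈ V.image (w (ζ i)), g p = g q) ∧
            R (m (ζ i)) (w (ζ i) x) (w (ζ i) y) - ε / 2 <
              (g (w (ζ i) x) - g (w (ζ i) y)) ^ 2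
                / finsetEnergy (V.image (w (ζ i))) (c (ζ i)) g := by
          intro i
          have hmx : w (ζ i) x ∈ V.image (w (ζ i)) := Finset.mem_image_of_mem _ hxV
          have hmy : w (ζ i) y ∈ V.image (w (ζ i)) := Finset.mem_image_of_mem _ hyV
          have hne : w (ζ i) x ≠ w (ζ i) y := fun hh => hxy (hwinj _ x hxV y hyV hh)
          have hlub := hclub (ζ i) _ hmx _ hmy hne
          by_contra hcon
          push_neg at hcon
          have hub := hlub.2 (by
            rintro t ⟨g, hgnc, rfl⟩
            push_neg at hgnc
            exact hcon g hgnc)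
          linarith
        choose g hgnc hglt using hex
        have hEipos : ∀ i, 0 < finsetEnergy (V.image (w (ζ i))) (c (ζ i)) (g i) :=
          fun i => energy_pos (hcnn (ζ i)) (hciff (ζ i)) (hgnc i)
        set hfun : ℕ → B → ℝ := fun i z =>
          (g i z - g i (w (ζ i) x)) / Real.sqrt (finsetEnergy (V.image (w (ζ i))) (c (ζ i)) (g i))
          with hhdef
        have hEh : ∀ i, finsetEnergy (V.image (w (ζ i))) (c (ζ i)) (hfun i) = 1 := by
          intro i
          have hEpos2 := hEipos i
          have heq : hfun i = fun z =>
              (Real.sqrt (finsetEnergy (V.image (w (ζ i))) (c (ζ i)) (g i)))⁻¹ * g i z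
              + (-(g i (w (ζ i) x))
                  / Real.sqrt (finsetEnergy (V.image (w (ζ i))) (c (ζ i)) (g i))) := by
            funext z
            simp only [hhdef]
            ring
          rw [heq, energy_affine]
          rw [inv_pow, Real.sq_sqrt hEpos2.le]
          exact inv_mul_cancel₀ hEpos2.ne'
        have hhb : ∀ i, ∀ a ∈ V, |hfun i (w (ζ i) a)| ≤ Real.sqrt M := by
          intro i a ha
          have hma : w (ζ i) a ∈ V.image (w (ζ i)) := Finset.mem_image_of_mem _ ha
          have hmx : w (ζ i) x ∈ V.image (w (ζ i)) := Finset.mem_image_of_mem _ hxV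
          by_cases hax : w (ζ i) a = w (ζ i) x
          · rw [hhdef]
            simp only [hax, sub_self, zero_div, abs_zero]
            positivity
          · have habs := abs_sub_le_sqrt (hcnn (ζ i)) (hciff (ζ i)) hma hmx hax
              (hclub (ζ i) _ hma _ hmx hax) (g i)
            have hRM : Real.sqrt (R (m (ζ i)) (w (ζ i) a) (w (ζ i) x)) ≤ Real.sqrt M :=
              Real.sqrt_le_sqrt (hRle _ _ (hwmem _ a) _ (hwmem _ x))
            have hsE : 0 < Real.sqrt (finsetEnergy (V.image (w (ζ i))) (c (ζ i)) (g i)) :=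
              Real.sqrt_pos.mpr (hEipos i)
            rw [hhdef]
            simp only [abs_div, abs_of_pos hsE]
            rw [div_le_iff₀ hsE]
            calc |g i (w (ζ i) a) - g i (w (ζ i) x)|
                ≤ Real.sqrt (R (m (ζ i)) (w (ζ i) a) (w (ζ i) x))
                  * Real.sqrt (finsetEnergy (V.image (w (ζ i))) (c (ζ i)) (g i)) := habs
              _ ≤ Real.sqrt M
                  * Real.sqrt (finsetEnergy (V.image (w (ζ i))) (c (ζ i)) (g i)) :=
                  mul_le_mul_of_nonneg_right hRM (Real.sqrt_nonneg _)
        set H : ℕ → ↥V → ℝ := fun i v => hfun i (w (ζ i) v.1) with hHdef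
        have hHS : ∀ i, H i ∈ Set.univ.pi
            (fun _ : ↥V => Set.Icc (-(Real.sqrt M)) (Real.sqrt M)) := by
          intro i
          rw [Set.mem_univ_pi]
          intro v
          have hv := hhb i v.1 v.2
          rw [abs_le] at hv
          exact ⟨hv.1, hv.2⟩
        obtain ⟨hl, -, ξ, hξ, hHconv⟩ :=
          (isCompact_univ_pi fun _ : ↥V => isCompact_Icc).tendsto_subseq hHS
        set finf : B → ℝ := fun z => if hz : z ∈ V then hl ⟨z, hz⟩ else 0 with hfinfdef
        have hfconv : ∀ a, ∀ ha : a ∈ V,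
            Tendsto (fun i2 => hfun (ξ i2) (w (ζ (ξ i2)) a)) atTop (𝓝 (finf a)) := by
          intro a ha
          have hh := tendsto_pi_nhds.mp hHconv ⟨a, ha⟩
          have he2 : finf a = hl ⟨a, ha⟩ := by
            rw [hfinfdef]; simp [ha]
          rw [he2]
          exact hh
        have hE1 : Tendsto
            (fun i2 => finsetEnergy V (cc2 (ζ (ξ i2))) (fun a => hfun (ξ i2) (w (ζ (ξ i2)) a)))
            atTop (𝓝 (finsetEnergy V cinf finf)) := by
          apply energy_tendsto
          · intro a ha b2 hb2
            exact (hclc a ha b2 hb2).comp hξ.tendsto_atTop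
          · intro a ha
            exact hfconv a ha
        have hE2 : ∀ i2, finsetEnergy V (cc2 (ζ (ξ i2)))
            (fun a => hfun (ξ i2) (w (ζ (ξ i2)) a)) = 1 := by
          intro i2
          rw [← hEtrans (ζ (ξ i2)) (hfun (ξ i2))]
          exact hEh (ξ i2)
        have hEfinf : finsetEnergy V cinf finf = 1 := by
          simp only [hE2] at hE1
          exact tendsto_nhds_unique hE1 tendsto_const_nhds
        have hratio : RL x y - ε / 2 ≤ (finf x - finf y) ^ 2 := by
          have hle : ∀ i2, R (m (ζ (ξ i2))) (w (ζ (ξ i2)) x) (w (ζ (ξ i2)) y) - ε / 2 ≤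
              (hfun (ξ i2) (w (ζ (ξ i2)) x) - hfun (ξ i2) (w (ζ (ξ i2)) y)) ^ 2 := by
            intro i2
            have hq := hglt (ξ i2)
            have hcalc : (hfun (ξ i2) (w (ζ (ξ i2)) x) - hfun (ξ i2) (w (ζ (ξ i2)) y)) ^ 2
                = (g (ξ i2) (w (ζ (ξ i2)) x) - g (ξ i2) (w (ζ (ξ i2)) y)) ^ 2
                  / finsetEnergy (V.image (w (ζ (ξ i2)))) (c (ζ (ξ i2))) (g (ξ i2)) := by
              rw [hhdef]
              simp only []
              rw [div_sub_div_same, div_pow, Real.sq_sqrt (hEipos (ξ i2)).le]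
              congr 1
              ring
            rw [hcalc]
            linarith
          have hlhs : Tendsto
              (fun i2 => R (m (ζ (ξ i2))) (w (ζ (ξ i2)) x) (w (ζ (ξ i2)) y) - ε / 2)
              atTop (𝓝 (RL x y - ε / 2)) :=
            (((hRconv x hxV y hyV).comp hξ.tendsto_atTop)).sub_const _
          have hrhs : Tendsto
              (fun i2 => (hfun (ξ i2) (w (ζ (ξ i2)) x) - hfun (ξ i2) (w (ζ (ξ i2)) y)) ^ 2)
              atTop (𝓝 ((finf x - finf y) ^ 2)) :=
            ((hfconv x hxV).sub (hfconv y hyV)).pow 2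
          exact le_of_tendsto_of_tendsto' hlhs hrhs hle
        have hfinfnc : ¬∀ a ∈ V, ∀ b' ∈ V, finf a = finf b' := by
          intro hcon
          have h0 : finf x = finf y := hcon x hxV y hyV
          have h00 : (finf x - finf y) ^ 2 = 0 := by rw [h0]; ring
          rw [h00] at hratio
          linarith
        have hmem2 := hb ⟨finf, hfinfnc, rfl⟩
        rw [hEfinf, div_one] at hmem2
        linarith
      apply le_of_forall_pos_le_add
      intro ε hε
      rcases lt_or_ge ε (RL x y) with h | h
      · exact hkey ε hε h
      · linarith
  exact ⟨RL, hres, hbounds, φ, hφ, hgen⟩
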